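/- Let n, d, c be positive integers, X̃ ∈ ℝ^{n×d} a fixed matrix, and 𝒵_*, ℰ_{f,1} ≥ 0. Then (1/2^{nc}) Σ_{σ : [n]×[c] → {−1,+1}} sup{ (1/(nc)) Σ_{i=1}^n Σ_{j=1}^c σ(i,j) · ((X̃ − E_f)Z)_{ij} : Z ∈ ℝ^{d×c}, E_f ∈ ℝ^{n×d}, ‖Z‖_* ≤ 𝒵_*, ‖E_f‖₁ ≤ ℰ_{f,1} } ≤ 𝒵_* · (‖X̃‖_F + √d · ℰ_{f,1}) / √(nc). -/

import Mathlib

open Matrix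

/-- Entrywise ℓ1-norm of a real matrix. -/
noncomputable def l1Norm {m k : ℕ} (A : Matrix (Fin m) (Fin k) ℝ) : ℝ :=
  ∑ i, ∑ j, |A i j|

/-- Frobenius norm of a real matrix. -/
noncomputable def frobNorm {m k : ℕ} (A : Matrix (Fin m) (Fin k) ℝ) : ℝ :=
  Real.sqrt (∑ i, ∑ j, (A i j) ^ 2)

/-- Nuclear norm of a real matrix: tr((AᵀA)^{1/2}), i.e. the sum of the singular values. -/
noncomputable def nuclearNorm {m k : ℕ} (A : Matrix (Fin m) (Fin k) ℝ) : ℝ :=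
  ((Matrix.posSemidef_conjTranspose_mul_self A).1.eigenvectorUnitary.1 *
    Matrix.diagonal ((RCLike.ofReal : ℝ → ℝ) ∘ Real.sqrt ∘ (Matrix.posSemidef_conjTranspose_mul_self A).1.eigenvalues) *
    (star (Matrix.posSemidef_conjTranspose_mul_self A).1.eigenvectorUnitary : Matrix (Fin k) (Fin k) ℝ)).trace

/-- The real sign ±1 associated with a Boolean Rademacher variable. -/
noncomputable def sgn (b : Bool) : ℝ := if b then 1 else -1

/-! Each sign pattern is bounded separately. By Cauchy–Schwarz against the ±1 matrix,
`∑ σᵢⱼ Mᵢⱼ ≤ √(nc) ‖M‖_F`, and `‖(X̃ - E)Z‖_F ≤ (‖X̃‖_F + ‖E‖_F) ‖Z‖_F` by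
submultiplicativity. Finally `‖E‖_F ≤ ‖E‖₁` and `‖Z‖_F ≤ ‖Z‖_*`, the latter because
`‖Z‖_F² = ∑ sᵢ² ≤ (∑ sᵢ)²` for the singular values `sᵢ ≥ 0` of `Z`. -/

attribute [local instance] Matrix.frobeniusSeminormedAddCommGroup

lemma frobNorm_eq_norm {m k : ℕ} (A : Matrix (Fin m) (Fin k) ℝ) : frobNorm A = ‖A‖ := by
  simp [frobNorm, frobenius_norm_def, Real.sqrt_eq_rpow]

lemma frobNorm_nonneg {m k : ℕ} (A : Matrix (Fin m) (Fin k) ℝ) : 0 ≤ frobNorm A :=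
  Real.sqrt_nonneg _

lemma l1Norm_nonneg {m k : ℕ} (A : Matrix (Fin m) (Fin k) ℝ) : 0 ≤ l1Norm A := by
  unfold l1Norm; positivity

lemma sq_frobNorm {m k : ℕ} (A : Matrix (Fin m) (Fin k) ℝ) :
    frobNorm A ^ 2 = (Aᵀ * A).trace := by
  rw [frobNorm, Real.sq_sqrt (by positivity), Finset.sum_comm]
  simp [Matrix.trace, Matrix.mul_apply, sq]

lemma nuclearNorm_eq_sum_sqrt_eigenvalues {m k : ℕ} (A : Matrix (Fin m) (Fin k) ℝ) :
    nuclearNorm A = ∑ i, √((Matrix.posSemidef_conjTranspose_mul_self A).1.eigenvalues i) := by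
  rw [nuclearNorm, Matrix.trace_mul_cycle, Unitary.coe_star_mul_self, Matrix.one_mul,
    Matrix.trace_diagonal]
  rfl

lemma frobNorm_le_nuclearNorm {m k : ℕ} (A : Matrix (Fin m) (Fin k) ℝ) :
    frobNorm A ≤ nuclearNorm A := by
  have hA := Matrix.posSemidef_conjTranspose_mul_self A
  have hsq : frobNorm A ^ 2 = ∑ i, √(hA.1.eigenvalues i) ^ 2 := by
    simp_rw [sq_frobNorm, Real.sq_sqrt (hA.eigenvalues_nonneg _)]
    exact hA.1.trace_eq_sum_eigenvalues
  rw [nuclearNorm_eq_sum_sqrt_eigenvalues]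
  refine le_of_pow_le_pow_left₀ two_ne_zero (by positivity) ?_
  exact hsq ▸ Finset.sum_sq_le_sq_sum_of_nonneg fun i _ => Real.sqrt_nonneg _

lemma frobNorm_le_l1Norm {m k : ℕ} (A : Matrix (Fin m) (Fin k) ℝ) :
    frobNorm A ≤ l1Norm A := by
  rw [frobNorm, Real.sqrt_le_left (l1Norm_nonneg A), l1Norm]
  calc ∑ i, ∑ j, A i j ^ 2 = ∑ i, ∑ j, |A i j| ^ 2 := by simp_rw [sq_abs]
    _ ≤ ∑ i, (∑ j, |A i j|) ^ 2 := by
      gcongr with i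
      exact Finset.sum_sq_le_sq_sum_of_nonneg fun j _ => abs_nonneg _
    _ ≤ (∑ i, ∑ j, |A i j|) ^ 2 := Finset.sum_sq_le_sq_sum_of_nonneg fun i _ => by positivity

lemma frobNorm_le_sqrt_mul_l1Norm {m k : ℕ} (A : Matrix (Fin m) (Fin k) ℝ) :
    frobNorm A ≤ √k * l1Norm A := by
  rcases Nat.eq_zero_or_pos k with rfl | hk
  · simp [frobNorm, l1Norm]
  · exact (frobNorm_le_l1Norm A).trans <|
      le_mul_of_one_le_left (l1Norm_nonneg A) (Real.one_le_sqrt.mpr (by exact_mod_cast hk))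

lemma frobNorm_sub_mul_le {m k l : ℕ} (X E : Matrix (Fin m) (Fin k) ℝ)
    (Z : Matrix (Fin k) (Fin l) ℝ) {ε ζ : ℝ} (hE : l1Norm E ≤ ε) (hZ : nuclearNorm Z ≤ ζ) :
    frobNorm ((X - E) * Z) ≤ ζ * (frobNorm X + √k * ε) := by
  have hXE : frobNorm (X - E) ≤ frobNorm X + √k * ε :=
    calc frobNorm (X - E) ≤ frobNorm X + frobNorm E := by
          simpa only [frobNorm_eq_norm] using norm_sub_le X E
      _ ≤ frobNorm X + √k * ε := by
          gcongr
          exact (frobNorm_le_sqrt_mul_l1Norm E).trans (by gcongr)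
  calc frobNorm ((X - E) * Z) ≤ frobNorm (X - E) * frobNorm Z := by
        simpa only [frobNorm_eq_norm] using Matrix.frobenius_norm_mul (X - E) Z
    _ ≤ (frobNorm X + √k * ε) * ζ :=
        mul_le_mul hXE ((frobNorm_le_nuclearNorm Z).trans hZ) (frobNorm_nonneg Z)
          ((frobNorm_nonneg _).trans hXE)
    _ = ζ * (frobNorm X + √k * ε) := mul_comm _ _

lemma sum_sgn_mul_le {ι : Type*} [Fintype ι] (σ : ι → Bool) (f : ι → ℝ) :
    ∑ i, sgn (σ i) * f i ≤ √(Fintype.card ι) * √(∑ i, f i ^ 2) := by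
  have hsgn : ∀ b, sgn b ^ 2 = 1 := by intro b; cases b <;> norm_num [sgn]
  simpa [hsgn] using Real.sum_mul_le_sqrt_mul_sqrt Finset.univ (fun i => sgn (σ i)) f

lemma mean_sgn_mul_le_frobNorm {m k : ℕ} (σ : Fin m × Fin k → Bool)
    (M : Matrix (Fin m) (Fin k) ℝ) :
    (1 / (m * k) : ℝ) * ∑ i, ∑ j, sgn (σ (i, j)) * M i j ≤ frobNorm M / √(m * k) := by
  have hcs : ∑ i, ∑ j, sgn (σ (i, j)) * M i j ≤ √(m * k) * frobNorm M := by
    simpa [← Fintype.sum_prod_type', frobNorm] using sum_sgn_mul_le σ fun p => M p.1 p.2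
  calc (1 / (m * k) : ℝ) * ∑ i, ∑ j, sgn (σ (i, j)) * M i j
      ≤ 1 / (m * k) * (√(m * k) * frobNorm M) := by gcongr
    _ = frobNorm M / √(m * k) := by
      rw [← mul_assoc, one_div_mul_eq_div, Real.sqrt_div_self', one_div_mul_eq_div]

lemma mean_le_of_forall_le {α : Type*} [Fintype α] [Nonempty α] {f : α → ℝ} {B : ℝ}
    (h : ∀ a, f a ≤ B) : (1 / Fintype.card α : ℝ) * ∑ a, f a ≤ B := by
  have hsum : ∑ a, f a ≤ Fintype.card α * B := by
    simpa using Finset.sum_le_card_nsmul Finset.univ f B fun a _ => h a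
  rw [one_div_mul_eq_div, div_le_iff₀' (by exact_mod_cast Fintype.card_pos)]
  exact hsum

theorem rademacher_feature_noise_bound_general (n d c : ℕ)
    (Xt : Matrix (Fin n) (Fin d) ℝ) (Zs Ef1 : ℝ) (hZs : 0 ≤ Zs) (hEf1 : 0 ≤ Ef1) :
    ((1 : ℝ) / 2 ^ (n * c)) * ∑ σ : Fin n × Fin c → Bool,
        sSup {v : ℝ | ∃ (Z : Matrix (Fin d) (Fin c) ℝ) (Ef : Matrix (Fin n) (Fin d) ℝ),
          nuclearNorm Z ≤ Zs ∧ l1Norm Ef ≤ Ef1 ∧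
          v = ((1 : ℝ) / (n * c)) * ∑ i : Fin n, ∑ j : Fin c,
            sgn (σ (i, j)) * ((Xt - Ef) * Z) i j} ≤
      Zs * (frobNorm Xt + Real.sqrt d * Ef1) / Real.sqrt (n * c) := by
  have hcard : (2 : ℝ) ^ (n * c) = Fintype.card (Fin n × Fin c → Bool) := by simp
  rw [hcard]
  refine mean_le_of_forall_le fun σ => Real.sSup_le ?_ ?_
  · rintro v ⟨Z, Ef, hZ, hE, rfl⟩
    refine (mean_sgn_mul_le_frobNorm σ _).trans ?_
    gcongr
    exact frobNorm_sub_mul_le Xt Ef Z hE hZ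
  · have := frobNorm_nonneg Xt
    positivity

/-- the empirical Rademacher complexity of the class of matrices
    (X̃ − E_f)Z with ‖Z‖_* ≤ 𝒵_* and ‖E_f‖₁ ≤ ℰ_{f,1}, on the index set [n]×[c], is
    bounded by 𝒵_*·(‖X̃‖_F + √d·ℰ_{f,1})/√(nc). -/
theorem rademacher_feature_noise_bound (n d c : ℕ) (hn : 0 < n) (hd : 0 < d) (hc : 0 < c)
    (Xt : Matrix (Fin n) (Fin d) ℝ) (Zs Ef1 : ℝ) (hZs : 0 ≤ Zs) (hEf1 : 0 ≤ Ef1) :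
    ((1 : ℝ) / 2 ^ (n * c)) * ∑ σ : Fin n × Fin c → Bool,
        sSup {v : ℝ | ∃ (Z : Matrix (Fin d) (Fin c) ℝ) (Ef : Matrix (Fin n) (Fin d) ℝ),
          nuclearNorm Z ≤ Zs ∧ l1Norm Ef ≤ Ef1 ∧
          v = ((1 : ℝ) / (n * c)) * ∑ i : Fin n, ∑ j : Fin c,
            sgn (σ (i, j)) * ((Xt - Ef) * Z) i j} ≤
      Zs * (frobNorm Xt + Real.sqrt d * Ef1) / Real.sqrt (n * c) :=
  rademacher_feature_noise_bound_general n d c Xt Zs Ef1 hZs hEf1
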